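/- Let p₁ < p₂ be two distinct primes, set n = (q^{p₁p₂}−1)/lcm(q^{p₁}−1, q^{p₂}−1) (note n is coprime to q), and assume p₂ ∤ (q^{p₁}−1)/r. Then {l_i : i ∈ Z_{n,r}} = {1, p₁p₂}, N_1 = 1, N_{p₁} = N_{p₂} = 0, and N_{p₁p₂} = (n−1)/(p₁p₂). -/

import Mathlib

open scoped Classical

/-- The `q`-cyclotomic coset of `i` modulo `N`, with representatives taken in `{1, …, N}`. -/
noncomputable def cosetOf (q N i : ℕ) : Finset ℕ :=
  (Finset.Icc 1 N).filter (fun x => ∃ j : ℕ, x ≡ i * q ^ j [MOD N])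

/-- `Z_{n,r} = {1 + i r : 0 ≤ i ≤ n-1}`. -/
def Zset (n r : ℕ) : Finset ℕ := (Finset.range n).image (fun i => 1 + i * r)

/-- The collection of `q`-cyclotomic cosets contained in `Z_{n,r}`. -/
noncomputable def cosetsIn (q n r : ℕ) : Finset (Finset ℕ) :=
  (Zset n r).image (fun i => cosetOf q (n * r) i)

/-- `N_l`: the number of `q`-cyclotomic cosets of size `l` contained in `Z_{n,r}`. -/
noncomputable def Ncount (q n r l : ℕ) : ℕ :=
  ((cosetsIn q n r).filter (fun C => C.card = l)).card

/-- Coset leader: the smallest element of a coset. -/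
noncomputable def leader (C : Finset ℕ) : ℕ := sInf (C : Set ℕ)

/-- The sorted (increasing) list of coset leaders of the cosets of size `l` in `Z_{n,r}`. -/
noncomputable def leaderList (q n r l : ℕ) : List ℕ :=
  Finset.sort (((cosetsIn q n r).filter (fun C => C.card = l)).image leader) (· ≤ ·)

/-- `δ_i^{(l)}`: the `i`-th smallest coset leader (1-indexed). -/
noncomputable def delta (q n r l i : ℕ) : ℕ := (leaderList q n r l).getD (i - 1) 0

/-!
Put `A = q^p₁ - 1`, `B = q^p₂ - 1`. As `gcd(A, B) = q - 1`, the definition of `n` gives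
`n · (q^p₂ - 1)/(q - 1) = Σ_{k<p₂} q^(p₁k)`, and symmetrically with `p₁, p₂` swapped. A prime
`ℓ ∣ n` with `q^p₁ ≡ 1 (mod ℓ)` therefore divides `Σ_{k<p₂} 1 = p₂`. With Fermat's little theorem
(for `B`) and the hypothesis `p₂ ∤ A/r` (for `A`) this makes `n` coprime to `A` and `B`, so `q` has
order exactly `p₁p₂` modulo every divisor `d > 1` of `n`; moreover `n` is coprime to `r ∣ A`.

For `i ∈ Z_{n,r}` the congruence `i q^m ≡ i (mod nr)` holds modulo `r` for free, so it amounts to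
`q^m ≡ 1 (mod n / gcd(n, i))`. The coset of `i` is thus `{i}` if `n ∣ i`, which happens for exactly
one `i ∈ Z_{n,r}` since `r` is invertible modulo `n`, and has `p₁p₂` elements otherwise. Counting the
`n` elements of `Z_{n,r}` coset by coset gives `n = 1 + p₁p₂ N_{p₁p₂}`.
-/

open Finset

lemma orderOf_natCast_dvd_iff {q d m : ℕ} : orderOf (q : ZMod d) ∣ m ↔ q ^ m ≡ 1 [MOD d] := by
  rw [orderOf_dvd_iff_pow_eq_one, ← Nat.cast_pow, ← Nat.cast_one, ZMod.natCast_eq_natCast_iff]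

lemma dvd_pow_sub_one_iff {q d m : ℕ} (hq : 0 < q) : d ∣ q ^ m - 1 ↔ q ^ m ≡ 1 [MOD d] :=
  (Nat.modEq_iff_dvd' (Nat.one_le_pow _ _ hq)).symm.trans Nat.ModEq.comm

lemma coprime_of_dvd_pow_sub_one {q d m : ℕ} (hq : 0 < q) (hm : m ≠ 0) (h : d ∣ q ^ m - 1) :
    q.Coprime d := by
  rw [dvd_pow_sub_one_iff hq, ← orderOf_natCast_dvd_iff, orderOf_dvd_iff_pow_eq_one] at h
  exact (ZMod.isUnit_iff_coprime q d).1 (IsUnit.of_pow_eq_one h hm)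

lemma dvd_of_dvd_geom_sum {ℓ x b : ℕ} (hx : x ≡ 1 [MOD ℓ]) (h : ℓ ∣ ∑ k ∈ range b, x ^ k) :
    ℓ ∣ b := by
  rw [← ZMod.natCast_eq_zero_iff, Nat.cast_sum] at h
  rw [← ZMod.natCast_eq_natCast_iff, Nat.cast_one] at hx
  rw [← ZMod.natCast_eq_zero_iff]
  simpa [hx] using h

lemma geom_sum_lt_geom_sum_pow {q a b : ℕ} (hq : 1 < q) (ha : 1 < a) (hb : 1 < b) :
    ∑ k ∈ range b, q ^ k < ∑ k ∈ range b, (q ^ a) ^ k := by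
  refine sum_lt_sum (fun k _ => ?_) ⟨1, mem_range.2 hb, ?_⟩
  · rw [← pow_mul]
    exact Nat.pow_le_pow_right (by omega) (Nat.le_mul_of_pos_left k (by omega))
  · rw [pow_one, pow_one]
    exact lt_self_pow₀ hq ha

lemma lcm_pow_sub_one_dvd (q a b : ℕ) : Nat.lcm (q ^ a - 1) (q ^ b - 1) ∣ q ^ (a * b) - 1 :=
  Nat.lcm_dvd (Nat.pow_sub_one_dvd_pow_sub_one q (dvd_mul_right a b))
    (Nat.pow_sub_one_dvd_pow_sub_one q (dvd_mul_left b a))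

lemma div_lcm_mul_geom_sum {q a b : ℕ} (hq : 2 ≤ q) (ha : 0 < a) (hab : a.Coprime b) :
    (q ^ (a * b) - 1) / Nat.lcm (q ^ a - 1) (q ^ b - 1) * ∑ k ∈ range b, q ^ k =
      ∑ k ∈ range b, (q ^ a) ^ k := by
  set T := ∑ k ∈ range b, q ^ k
  set S := ∑ k ∈ range b, (q ^ a) ^ k
  have hA : 0 < q ^ a - 1 := Nat.sub_pos_of_lt (Nat.one_lt_pow ha.ne' (by omega))
  have hT : T * (q - 1) = q ^ b - 1 := geom_sum_mul_of_one_le (by omega) b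
  have hS : S * (q ^ a - 1) = q ^ (a * b) - 1 := by
    rw [pow_mul]; exact geom_sum_mul_of_one_le (Nat.one_le_pow _ _ (by omega)) b
  -- gcd(q^a - 1, q^b - 1) = q - 1, so the lcm is (q^a - 1) T
  have hlcm : Nat.lcm (q ^ a - 1) (q ^ b - 1) = (q ^ a - 1) * T := by
    have h := Nat.gcd_mul_lcm (q ^ a - 1) (q ^ b - 1)
    rw [Nat.pow_sub_one_gcd_pow_sub_one, hab.gcd_eq_one, pow_one] at h
    exact Nat.eq_of_mul_eq_mul_left (n := q - 1) (by omega) (by rw [h, ← hT]; ring)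
  have hdvd : (q ^ a - 1) * T ∣ (q ^ a - 1) * S := by
    rw [← hlcm, mul_comm, hS]
    exact lcm_pow_sub_one_dvd q a b
  rw [hlcm, ← hS, mul_comm S, Nat.mul_div_mul_left _ _ hA,
    Nat.div_mul_cancel (Nat.dvd_of_mul_dvd_mul_left hA hdvd)]

lemma one_lt_div_lcm {q a b : ℕ} (hq : 2 ≤ q) (ha : 1 < a) (hb : 1 < b) (hab : a.Coprime b) :
    1 < (q ^ (a * b) - 1) / Nat.lcm (q ^ a - 1) (q ^ b - 1) := by
  have h := div_lcm_mul_geom_sum hq (by omega) hab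
  have := geom_sum_lt_geom_sum_pow (by omega : 1 < q) ha hb
  by_contra! hle
  have := Nat.mul_le_mul_right (∑ k ∈ range b, q ^ k) hle
  omega

section CyclotomicValue

variable {q p₁ p₂ n : ℕ}

lemma coprime_pow_sub_one_right (hq : 0 < q) (hp1 : p₁.Prime) (hp2 : p₂.Prime) (hlt : p₁ < p₂)
    (hn₁ : n ∣ ∑ k ∈ range p₂, (q ^ p₁) ^ k) (hn₂ : n ∣ ∑ k ∈ range p₁, (q ^ p₂) ^ k) :
    n.Coprime (q ^ p₂ - 1) := by
  refine Nat.coprime_of_dvd fun ℓ hℓ hℓn hℓB => ?_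
  rw [dvd_pow_sub_one_iff hq] at hℓB
  obtain rfl : p₁ = ℓ :=
    ((Nat.prime_dvd_prime_iff_eq hℓ hp1).1 (dvd_of_dvd_geom_sum hℓB (hℓn.trans hn₂))).symm
  have : Fact p₁.Prime := ⟨hp1⟩
  have hpow : (q : ZMod p₁) ^ p₂ = 1 :=
    orderOf_dvd_iff_pow_eq_one.1 (orderOf_natCast_dvd_iff.2 hℓB)
  have hq0 : (q : ZMod p₁) ≠ 0 := fun h => by
    rw [h, zero_pow hp2.ne_zero] at hpow
    exact zero_ne_one hpow
  -- the order of q modulo p₁ divides the prime p₂ and is at most p₁ - 1 < p₂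
  have hord : orderOf (q : ZMod p₁) = 1 := by
    refine (hp2.eq_one_or_self_of_dvd _ (orderOf_natCast_dvd_iff.2 hℓB)).resolve_right fun h => ?_
    have := Nat.le_of_dvd (by have := hp1.two_le; omega) (ZMod.orderOf_dvd_card_sub_one hq0)
    omega
  have hq1 : q ≡ 1 [MOD p₁] := by
    simpa using (orderOf_natCast_dvd_iff (m := 1)).1 (by rw [hord])
  have := (Nat.prime_dvd_prime_iff_eq hp1 hp2).1
    (dvd_of_dvd_geom_sum (by simpa using hq1.pow p₁) (hℓn.trans hn₁))
  omega

lemma coprime_pow_sub_one_left (hq : 0 < q) (hp1 : p₁.Prime) (hp2 : p₂.Prime) (hlt : p₁ < p₂)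
    (hn₁ : n ∣ ∑ k ∈ range p₂, (q ^ p₁) ^ k) (hn₂ : n ∣ ∑ k ∈ range p₁, (q ^ p₂) ^ k)
    {r : ℕ} (hrq : r ∣ q - 1) (hndvd : ¬ p₂ ∣ (q ^ p₁ - 1) / r) :
    n.Coprime (q ^ p₁ - 1) := by
  refine Nat.coprime_of_dvd fun ℓ hℓ hℓn hℓA => ?_
  obtain rfl : p₂ = ℓ := ((Nat.prime_dvd_prime_iff_eq hℓ hp2).1
    (dvd_of_dvd_geom_sum ((dvd_pow_sub_one_iff hq).1 hℓA) (hℓn.trans hn₁))).symm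
  -- p₂ ∤ q - 1: otherwise q ≡ 1 [MOD p₂] and then p₂ ∣ p₁
  have hp2q : ¬ p₂ ∣ q - 1 := fun h => by
    have hq1 : q ≡ 1 [MOD p₂] := by simpa using (dvd_pow_sub_one_iff (m := 1) hq).1 (by simpa)
    have := (Nat.prime_dvd_prime_iff_eq hp2 hp1).1
      (dvd_of_dvd_geom_sum (by simpa using hq1.pow p₂) (hℓn.trans hn₂))
    omega
  rw [← Nat.mul_div_cancel' (hrq.trans (Nat.sub_one_dvd_pow_sub_one q p₁))] at hℓA
  exact hndvd ((hp2.dvd_mul.1 hℓA).resolve_left fun h => hp2q (h.trans hrq))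

end CyclotomicValue

lemma orderOf_natCast_eq_mul {q p₁ p₂ d : ℕ} (hq : 0 < q) (hp1 : p₁.Prime) (hp2 : p₂.Prime)
    (hd : 1 < d) (hdM : q ^ (p₁ * p₂) ≡ 1 [MOD d]) (hdA : d.Coprime (q ^ p₁ - 1))
    (hdB : d.Coprime (q ^ p₂ - 1)) : orderOf (q : ZMod d) = p₁ * p₂ := by
  have hnot : ∀ p, d.Coprime (q ^ p - 1) → ¬ orderOf (q : ZMod d) ∣ p := fun p hp h =>
    hd.ne' (hp.eq_one_of_dvd ((dvd_pow_sub_one_iff hq).2 (orderOf_natCast_dvd_iff.1 h)))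
  obtain ⟨e₁, e₂, he₁, he₂, he⟩ := Nat.dvd_mul.1 (orderOf_natCast_dvd_iff.2 hdM)
  rcases hp1.eq_one_or_self_of_dvd _ he₁ with h₁ | h₁ <;>
    rcases hp2.eq_one_or_self_of_dvd _ he₂ with h₂ | h₂
  · exact absurd (by simp [← he, h₁, h₂]) (hnot p₁ hdA)
  · exact absurd (by simp [← he, h₁, h₂]) (hnot p₂ hdB)
  · exact absurd (by simp [← he, h₁, h₂]) (hnot p₁ hdA)
  · rw [← he, h₁, h₂]

/-- The representative of `y` modulo `N` in `{1, …, N}`; adding `N` before subtracting `1` keeps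
the truncated subtraction harmless at `y = 0`. -/
def residueRep (N y : ℕ) : ℕ := (y + N - 1) % N + 1

section Coset

variable {q N i x : ℕ}

lemma residueRep_mem_Icc (hN : 0 < N) (y : ℕ) : residueRep N y ∈ Icc 1 N := by
  have := Nat.mod_lt (y + N - 1) hN
  simp only [residueRep, mem_Icc]
  omega

lemma residueRep_modEq (hN : 0 < N) (y : ℕ) : residueRep N y ≡ y [MOD N] :=
  calc residueRep N y ≡ y + N - 1 + 1 [MOD N] := (Nat.mod_modEq _ _).add_right 1
    _ = y + N := by omega
    _ ≡ y [MOD N] := Nat.add_modEq_right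

lemma eq_of_modEq_of_mem_Icc {y : ℕ} (hx : x ∈ Icc 1 N) (hy : y ∈ Icc 1 N)
    (h : x ≡ y [MOD N]) : x = y := by
  rw [mem_Icc] at hx hy
  exact le_antisymm (h.le_of_lt_add (by omega)) (h.symm.le_of_lt_add (by omega))

lemma mem_cosetOf : x ∈ cosetOf q N i ↔ x ∈ Icc 1 N ∧ ∃ j, x ≡ i * q ^ j [MOD N] := by
  rw [cosetOf, mem_filter]

lemma self_mem_cosetOf (hi : i ∈ Icc 1 N) : i ∈ cosetOf q N i :=
  mem_cosetOf.2 ⟨hi, 0, by rw [pow_zero, mul_one]⟩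

lemma cosetOf_subset_cosetOf {j : ℕ} (h : x ≡ i * q ^ j [MOD N]) :
    cosetOf q N x ⊆ cosetOf q N i := by
  intro y hy
  obtain ⟨hy, k, hk⟩ := mem_cosetOf.1 hy
  refine mem_cosetOf.2 ⟨hy, j + k, ?_⟩
  calc y ≡ x * q ^ k [MOD N] := hk
    _ ≡ i * q ^ j * q ^ k [MOD N] := h.mul_right _
    _ = i * q ^ (j + k) := by ring

lemma cosetOf_eq_of_mem (hqN : q.Coprime N) (hx : x ∈ cosetOf q N i) :
    cosetOf q N x = cosetOf q N i := by
  obtain ⟨hxI, j, hj⟩ := mem_cosetOf.1 hx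
  obtain ⟨t, ht⟩ : ∃ t, Nat.totient N = t + 1 :=
    Nat.exists_eq_add_one.2 (Nat.totient_pos.2 (by rw [mem_Icc] at hxI; omega))
  refine (cosetOf_subset_cosetOf hj).antisymm (cosetOf_subset_cosetOf (j := j * t) ?_)
  -- by Euler, multiplying by `q ^ (j * (φ N - 1))` undoes multiplication by `q ^ j`
  calc i = i * 1 ^ j := by rw [one_pow, mul_one]
    _ ≡ i * (q ^ Nat.totient N) ^ j [MOD N] := ((Nat.ModEq.pow_totient hqN).symm.pow j).mul_left i
    _ = i * q ^ j * q ^ (j * t) := by rw [ht]; ring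
    _ ≡ x * q ^ (j * t) [MOD N] := hj.symm.mul_right _

lemma card_cosetOf {E : ℕ} (hqN : q.Coprime N) (hi : i ∈ Icc 1 N) (hE : 0 < E)
    (hper : ∀ m, i * q ^ m ≡ i [MOD N] ↔ E ∣ m) : (cosetOf q N i).card = E := by
  have hN : 0 < N := by rw [mem_Icc] at hi; omega
  have hshift : ∀ a b, i * q ^ a ≡ i * q ^ (a + b) [MOD N] ↔ E ∣ b := fun a b => by
    rw [← hper, Nat.ModEq.comm, pow_add, ← mul_assoc, mul_right_comm]
    exact ⟨Nat.ModEq.cancel_right_of_coprime (hqN.pow_left a).symm, fun h => h.mul_right _⟩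
  have hcoset : cosetOf q N i = (range E).image (fun j => residueRep N (i * q ^ j)) := by
    ext x
    rw [mem_cosetOf, mem_image]
    constructor
    · rintro ⟨hx, j, hj⟩
      refine ⟨j % E, mem_range.2 (Nat.mod_lt _ hE),
        eq_of_modEq_of_mem_Icc (residueRep_mem_Icc hN _) hx ?_⟩
      calc residueRep N (i * q ^ (j % E)) ≡ i * q ^ (j % E) [MOD N] := residueRep_modEq hN _
        _ ≡ i * q ^ (j % E + E * (j / E)) [MOD N] := (hshift _ _).2 (dvd_mul_right _ _)
        _ = i * q ^ j := by rw [Nat.mod_add_div]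
        _ ≡ x [MOD N] := hj.symm
    · rintro ⟨j, -, rfl⟩
      exact ⟨residueRep_mem_Icc hN _, j, residueRep_modEq hN _⟩
  rw [hcoset, card_image_of_injOn, card_range]
  intro a ha b hb hab
  wlog hle : a ≤ b generalizing a b
  · exact (this hb ha hab.symm (le_of_not_ge hle)).symm
  have hmod : i * q ^ a ≡ i * q ^ (a + (b - a)) [MOD N] := by
    have hrep := residueRep_modEq hN (i * q ^ a)
    simp only at hab
    rw [hab] at hrep
    rw [Nat.add_sub_cancel' hle]
    exact hrep.symm.trans (residueRep_modEq hN _)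
  have := Nat.eq_zero_of_dvd_of_lt ((hshift a (b - a)).1 hmod) (by rw [coe_range, Set.mem_Iio] at hb; omega)
  omega

end Coset

section Zset

variable {q n r i x : ℕ}

lemma mem_Zset (hr : 0 < r) : x ∈ Zset n r ↔ x ∈ Icc 1 (n * r) ∧ 1 ≡ x [MOD r] := by
  simp only [Zset, mem_image, mem_range, mem_Icc]
  constructor
  · rintro ⟨k, hk, rfl⟩
    have := Nat.mul_le_mul_right r hk
    rw [Nat.succ_mul] at this
    exact ⟨⟨by omega, by omega⟩, (Nat.modEq_iff_dvd' (by omega)).2 ⟨k, by rw [mul_comm]; omega⟩⟩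
  · rintro ⟨⟨h1, h2⟩, hmod⟩
    obtain ⟨k, hk⟩ := (Nat.modEq_iff_dvd' h1).1 hmod
    exact ⟨k, Nat.lt_of_mul_lt_mul_right (a := r) (by rw [mul_comm k]; omega),
      by rw [mul_comm k]; omega⟩

lemma card_Zset (hr : 0 < r) : (Zset n r).card = n := by
  rw [Zset, card_image_of_injective _ fun a b hab => Nat.eq_of_mul_eq_mul_right hr
    (Nat.add_left_cancel hab), card_range]

lemma cosetOf_subset_Zset (hr : 0 < r) (hqr : 1 ≡ q [MOD r]) (hi : i ∈ Zset n r) :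
    cosetOf q (n * r) i ⊆ Zset n r := by
  intro x hx
  obtain ⟨hxI, j, hj⟩ := mem_cosetOf.1 hx
  rw [mem_Zset hr] at hi ⊢
  refine ⟨hxI, ?_⟩
  calc 1 = 1 * 1 ^ j := by rw [one_pow, mul_one]
    _ ≡ i * q ^ j [MOD r] := hi.2.mul (hqr.pow j)
    _ ≡ x [MOD r] := (hj.of_mul_left n).symm

lemma card_filter_dvd_Zset (hn : 0 < n) (hnr : n.Coprime r) :
    ((Zset n r).filter (n ∣ ·)).card = 1 := by
  have : NeZero n := ⟨hn.ne'⟩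
  set u := ZMod.unitOfCoprime r hnr.symm
  set k₀ := (-(↑u⁻¹ : ZMod n)).val
  have hk₀ : ∀ k < n, n ∣ 1 + k * r ↔ k = k₀ := by
    intro k hk
    rw [← ZMod.natCast_eq_zero_iff, Nat.cast_add, Nat.cast_mul, Nat.cast_one,
      ← ZMod.coe_unitOfCoprime r hnr.symm]
    constructor
    · intro h
      rw [← ZMod.val_natCast_of_lt hk]
      congr 1
      linear_combination (↑u⁻¹ : ZMod n) * h - (k : ZMod n) * u.inv_mul
    · rintro rfl
      rw [ZMod.natCast_zmod_val, neg_mul, Units.inv_mul, add_neg_cancel]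
  rw [card_eq_one]
  refine ⟨1 + k₀ * r, ?_⟩
  ext x
  simp only [Zset, mem_filter, mem_image, mem_range, mem_singleton]
  constructor
  · rintro ⟨⟨k, hk, rfl⟩, hdvd⟩
    rw [(hk₀ k hk).1 hdvd]
  · rintro rfl
    exact ⟨⟨k₀, ZMod.val_lt _, rfl⟩, (hk₀ k₀ (ZMod.val_lt _)).2 rfl⟩

lemma card_Zset_eq_sum_card_cosetsIn (hr : 0 < r) (hqr : 1 ≡ q [MOD r])
    (hqN : q.Coprime (n * r)) : (Zset n r).card = ∑ C ∈ cosetsIn q n r, C.card := by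
  rw [card_eq_sum_card_image (cosetOf q (n * r)) (Zset n r)]
  refine sum_congr rfl fun C hC => ?_
  obtain ⟨i, hi, rfl⟩ := mem_image.1 hC
  congr 1
  ext x
  rw [mem_filter]
  constructor
  · rintro ⟨hx, h⟩
    exact h ▸ self_mem_cosetOf ((mem_Zset hr).1 hx).1
  · intro hx
    exact ⟨cosetOf_subset_Zset hr hqr hi hx, cosetOf_eq_of_mem hqN hx⟩

end Zset

section CosetSizes

variable {q n r P : ℕ}

lemma card_cosetOf_of_mem_Zset (hr : 0 < r) (hqr : 1 ≡ q [MOD r]) (hqN : q.Coprime (n * r))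
    (hnr : n.Coprime r) (hP : 0 < P) (hord : ∀ d, d ∣ n → 1 < d → orderOf (q : ZMod d) = P)
    {i : ℕ} (hi : i ∈ Zset n r) : (cosetOf q (n * r) i).card = if n ∣ i then 1 else P := by
  have hn : 0 < n := Nat.pos_of_ne_zero (by rintro rfl; simp [Zset] at hi)
  refine card_cosetOf hqN ((mem_Zset hr).1 hi).1 (by split_ifs <;> omega) fun m => ?_
  have hmodr : i * q ^ m ≡ i [MOD r] :=
    calc i * q ^ m ≡ i * 1 ^ m [MOD r] := (hqr.symm.pow m).mul_left i
      _ = i := by rw [one_pow, mul_one]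
  rw [← Nat.modEq_and_modEq_iff_modEq_mul hnr, and_iff_left hmodr]
  split_ifs with hni
  · simp only [one_dvd, iff_true]
    exact (Nat.modEq_zero_iff_dvd.2 (hni.mul_right _)).trans (Nat.modEq_zero_iff_dvd.2 hni).symm
  · have hg : 1 < n / n.gcd i := by
      rw [Nat.lt_div_iff_mul_lt' (Nat.gcd_dvd_left n i), mul_one]
      exact lt_of_le_of_ne (Nat.gcd_le_left i hn) fun h => hni (h ▸ Nat.gcd_dvd_right n i)
    constructor
    · intro h
      rw [← hord _ (Nat.div_dvd_of_dvd (Nat.gcd_dvd_left n i)) hg, orderOf_natCast_dvd_iff]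
      exact Nat.ModEq.cancel_left_div_gcd hn (by rwa [mul_one])
    · intro h
      rw [← hord n dvd_rfl (hg.trans_le (Nat.div_le_self _ _)), orderOf_natCast_dvd_iff] at h
      calc i * q ^ m ≡ i * 1 [MOD n] := h.mul_left i
        _ = i := mul_one i

lemma image_card_cosetOf_Zset (hr : 0 < r) (hqr : 1 ≡ q [MOD r]) (hqN : q.Coprime (n * r))
    (hnr : n.Coprime r) (hn : 1 < n) (hP : 0 < P)
    (hord : ∀ d, d ∣ n → 1 < d → orderOf (q : ZMod d) = P) :
    (Zset n r).image (fun i => (cosetOf q (n * r) i).card) = {1, P} := by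
  have hcard := fun {i} => card_cosetOf_of_mem_Zset (i := i) hr hqr hqN hnr hP hord
  obtain ⟨i₀, hi₀⟩ := card_eq_one.1 (card_filter_dvd_Zset (by omega) hnr)
  obtain ⟨hi₀Z, hni₀⟩ := mem_filter.1 (hi₀ ▸ mem_singleton_self i₀)
  have h1 : 1 ∈ Zset n r :=
    (mem_Zset hr).2 ⟨mem_Icc.2 ⟨le_rfl, Nat.one_le_iff_ne_zero.2 (by positivity)⟩, rfl⟩
  have hn1 : ¬ n ∣ 1 := fun h => by have := Nat.le_of_dvd one_pos h; omega
  ext l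
  simp only [mem_image, mem_insert, mem_singleton]
  constructor
  · rintro ⟨i, hi, rfl⟩
    rw [hcard hi]
    split_ifs <;> simp
  · rintro (rfl | rfl)
    · exact ⟨i₀, hi₀Z, by rw [hcard hi₀Z, if_pos hni₀]⟩
    · exact ⟨1, h1, by rw [hcard h1, if_neg hn1]⟩

lemma Ncount_eq_zero_of_notMem {l : ℕ}
    (hl : l ∉ (Zset n r).image (fun i => (cosetOf q (n * r) i).card)) : Ncount q n r l = 0 := by
  rw [Ncount, card_eq_zero, filter_eq_empty_iff]
  intro C hC hCl
  obtain ⟨i, hi, rfl⟩ := mem_image.1 hC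
  exact hl (mem_image.2 ⟨i, hi, hCl⟩)

lemma Ncount_one (hr : 0 < r) (hqr : 1 ≡ q [MOD r]) (hqN : q.Coprime (n * r))
    (hnr : n.Coprime r) (hn : 0 < n) (hP : 1 < P)
    (hord : ∀ d, d ∣ n → 1 < d → orderOf (q : ZMod d) = P) : Ncount q n r 1 = 1 := by
  have hsize : ∀ i ∈ Zset n r, (cosetOf q (n * r) i).card = 1 ↔ n ∣ i := fun i hi => by
    rw [card_cosetOf_of_mem_Zset hr hqr hqN hnr (by omega) hord hi]
    split_ifs with h
    · simp only [h]
    · simp only [h, iff_false]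
      omega
  obtain ⟨i₀, hi₀⟩ := card_eq_one.1 (card_filter_dvd_Zset hn hnr)
  rw [Ncount, cosetsIn, filter_image, filter_congr hsize, hi₀, image_singleton, card_singleton]

lemma Ncount_eq_div (hr : 0 < r) (hqr : 1 ≡ q [MOD r]) (hqN : q.Coprime (n * r))
    (hnr : n.Coprime r) (hn : 1 < n) (hP : 1 < P)
    (hord : ∀ d, d ∣ n → 1 < d → orderOf (q : ZMod d) = P) : Ncount q n r P = (n - 1) / P := by
  have himage : (cosetsIn q n r).image card = {1, P} := by
    rw [cosetsIn, image_image]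
    exact image_card_cosetOf_Zset hr hqr hqN hnr hn (by omega) hord
  have hsum : n = Ncount q n r 1 + Ncount q n r P * P :=
    calc n = ∑ C ∈ cosetsIn q n r, C.card :=
          (card_Zset hr).symm.trans (card_Zset_eq_sum_card_cosetsIn hr hqr hqN)
      _ = Ncount q n r 1 * 1 + Ncount q n r P * P := by
          rw [sum_comp (fun b : ℕ => b) card, himage, sum_pair hP.ne, smul_eq_mul, smul_eq_mul]
          rfl
      _ = Ncount q n r 1 + Ncount q n r P * P := by rw [mul_one]
  have h1 := Ncount_one hr hqr hqN hnr (by omega) hP hord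
  rw [show n - 1 = Ncount q n r P * P by omega, Nat.mul_div_cancel _ (by omega)]

end CosetSizes

theorem stmt19 (q r p₁ p₂ n : ℕ) (hq : IsPrimePow q) (hr : 0 < r) (hrdvd : r ∣ q - 1)
    (hp1 : p₁.Prime) (hp2 : p₂.Prime) (hlt : p₁ < p₂)
    (hn : n = (q ^ (p₁ * p₂) - 1) / Nat.lcm (q ^ p₁ - 1) (q ^ p₂ - 1))
    (hndvd : ¬ p₂ ∣ (q ^ p₁ - 1) / r) :
    (Zset n r).image (fun i => (cosetOf q (n * r) i).card) = {1, p₁ * p₂} ∧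
    Ncount q n r 1 = 1 ∧
    Ncount q n r p₁ = 0 ∧
    Ncount q n r p₂ = 0 ∧
    Ncount q n r (p₁ * p₂) = (n - 1) / (p₁ * p₂) := by
  have hq0 := hq.pos
  have hcop := (Nat.coprime_primes hp1 hp2).2 hlt.ne
  have hn₁ : n ∣ ∑ k ∈ range p₂, (q ^ p₁) ^ k :=
    Dvd.intro _ (hn ▸ div_lcm_mul_geom_sum hq.two_le hp1.pos hcop)
  have hn₂ : n ∣ ∑ k ∈ range p₁, (q ^ p₂) ^ k := Dvd.intro _ <| by
    rw [hn, mul_comm p₁, Nat.lcm_comm]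
    exact div_lcm_mul_geom_sum hq.two_le hp2.pos hcop.symm
  have hn1 : 1 < n := hn ▸ one_lt_div_lcm hq.two_le hp1.one_lt hp2.one_lt hcop
  have hnM : n ∣ q ^ (p₁ * p₂) - 1 := hn ▸ Nat.div_dvd_of_dvd (lcm_pow_sub_one_dvd q p₁ p₂)
  have hnA := coprime_pow_sub_one_left hq0 hp1 hp2 hlt hn₁ hn₂ hrdvd hndvd
  have hnB := coprime_pow_sub_one_right hq0 hp1 hp2 hlt hn₁ hn₂
  have hnr : n.Coprime r := hnA.coprime_dvd_right (hrdvd.trans (Nat.sub_one_dvd_pow_sub_one q p₁))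
  have hqr : 1 ≡ q [MOD r] := (Nat.modEq_iff_dvd' hq0).2 hrdvd
  have hqN : q.Coprime (n * r) := Nat.Coprime.mul_right
    (coprime_of_dvd_pow_sub_one hq0 (Nat.mul_ne_zero hp1.ne_zero hp2.ne_zero) hnM)
    (coprime_of_dvd_pow_sub_one hq0 one_ne_zero (by rwa [pow_one]))
  have hord : ∀ d, d ∣ n → 1 < d → orderOf (q : ZMod d) = p₁ * p₂ := fun d hdn hd =>
    orderOf_natCast_eq_mul hq0 hp1 hp2 hd ((dvd_pow_sub_one_iff hq0).1 (hdn.trans hnM))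
      (hnA.coprime_dvd_left hdn) (hnB.coprime_dvd_left hdn)
  have hP : 1 < p₁ * p₂ := Nat.one_lt_mul_iff.2 ⟨hp1.pos, hp2.pos, Or.inl hp1.one_lt⟩
  have himage := image_card_cosetOf_Zset hr hqr hqN hnr hn1 (by omega) hord
  refine ⟨himage, Ncount_one hr hqr hqN hnr (by omega) hP hord, Ncount_eq_zero_of_notMem ?_,
    Ncount_eq_zero_of_notMem ?_, Ncount_eq_div hr hqr hqN hnr hn1 hP hord⟩ <;>
    simp [himage, hp1.ne_one, hp2.ne_one, hp1.ne_zero, hp2.ne_zero]
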